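/- arXiv:2102.02321 — 2 statements merged into one kernel-verified Lean document; each statement's English description precedes it below -/
import Mathlib

section
/- For every integer d ≥ 1 there exists a constant C_0 such that for every constant C ≥ C_0 the following holds with r = (C/n)^{1/d}: letting X_1,…,X_n be independent uniform random points in [0,1]^d, asymptotically almost surely the number of cells of the side-s tessellation of [0,1]^d that are sparse with respect to {X_1,…,X_n} is at most e^{−K/2}·n. -/
/-
With `M = m^d` cells and `K = n/M` the mean number of points per cell, if at least
`L = ⌊e^{-K/2} n⌋ + 1` cells are sparse then some `L` of them, whose union has volume `L/M`,
together contain at most `L·R` points. A union bound over the `(M choose L) ≤ (eM/L)^L` choices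
of cells and the lower-tail bound for `Bin(n, L/M)` bound the probability of this by
`(LR + 1)·B^L` with `B ≤ e³ (e/R)^R K^{R-1} e^{-K/2}`. Taking `C` large makes
`K ≥ C/(4√d)^d` large, so `B ≤ 1/2`; and `K ≤ C/(2√d)^d` stays bounded, so `L` grows linearly
in `n` and `(LR + 1)·2^{-L} → 0`.
-/


open MeasureTheory Filter

/-- The uniform probability measure on `n` independent points in `[0,1]^d`. -/
noncomputable def unifCube (d n : ℕ) :
    Measure (Fin n → EuclideanSpace ℝ (Fin d)) :=
  (volume : Measure (Fin n → EuclideanSpace ℝ (Fin d))).restrict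
    {x | ∀ i, ∀ k, x i k ∈ Set.Icc (0 : ℝ) 1}

/-- The half-open cell of the side-`1/m` tessellation of `[0,1]^d` indexed by `v`. -/
def cell (d m : ℕ) (v : Fin d → Fin m) : Set (EuclideanSpace ℝ (Fin d)) :=
  {x | ∀ k : Fin d, (v k : ℝ) / m ≤ x k ∧ x k < ((v k : ℝ) + 1) / m}

/-- A cell is sparse with respect to the points `x` if it contains at most `R = 2·3^d`
of them. -/
def IsSparse (d m n : ℕ) (x : Fin n → EuclideanSpace ℝ (Fin d))
    (v : Fin d → Fin m) : Prop :=
  {i : Fin n | x i ∈ cell d m v}.ncard ≤ 2 * 3 ^ d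

/-- The number of sparse cells with respect to the points `x`. -/
noncomputable def sparseCount (d m n : ℕ)
    (x : Fin n → EuclideanSpace ℝ (Fin d)) : ℕ :=
  {v : Fin d → Fin m | IsSparse d m n x v}.ncard

open Finset

section Cells

variable {d : ℕ}

def unitCube (d : ℕ) : Set (EuclideanSpace ℝ (Fin d)) := {y | ∀ k, y k ∈ Set.Icc (0 : ℝ) 1}

lemma setOf_forall_mem_eq_preimage_pi (s : Fin d → Set ℝ) :
    {y : EuclideanSpace ℝ (Fin d) | ∀ k, y k ∈ s k} = WithLp.ofLp ⁻¹' Set.univ.pi s := by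
  ext y; simp [Set.mem_pi]

lemma measurableSet_setOf_forall_mem {s : Fin d → Set ℝ} (hs : ∀ k, MeasurableSet (s k)) :
    MeasurableSet {y : EuclideanSpace ℝ (Fin d) | ∀ k, y k ∈ s k} := by
  rw [setOf_forall_mem_eq_preimage_pi]
  exact (MeasurableSet.univ_pi hs).preimage (WithLp.measurable_ofLp 2 _)

lemma volume_setOf_forall_mem {s : Fin d → Set ℝ} (hs : ∀ k, MeasurableSet (s k)) :
    volume {y : EuclideanSpace ℝ (Fin d) | ∀ k, y k ∈ s k} = ∏ k, volume (s k) := by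
  rw [setOf_forall_mem_eq_preimage_pi, (PiLp.volume_preserving_ofLp (Fin d)).measure_preimage
    (MeasurableSet.univ_pi hs).nullMeasurableSet, volume_pi_pi]

lemma volume_unitCube : volume (unitCube d) = 1 := by
  rw [unitCube, volume_setOf_forall_mem fun _ => measurableSet_Icc]
  simp

lemma unifCube_univ_pi (n : ℕ) {B : Fin n → Set (EuclideanSpace ℝ (Fin d))}
    (hB : ∀ i, MeasurableSet (B i)) :
    unifCube d n (Set.univ.pi B) = ∏ i, volume (B i ∩ unitCube d) := by
  have hcube : {x : Fin n → EuclideanSpace ℝ (Fin d) | ∀ i, ∀ k, x i k ∈ Set.Icc (0 : ℝ) 1}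
      = Set.univ.pi fun _ => unitCube d := by
    ext x; simp [unitCube, Set.mem_pi]
  rw [unifCube, hcube, Measure.restrict_apply (MeasurableSet.univ_pi hB),
    ← Set.pi_inter_distrib, volume_pi_pi]

instance (n : ℕ) : IsProbabilityMeasure (unifCube d n) := by
  constructor
  rw [← Set.pi_univ, unifCube_univ_pi n fun _ => MeasurableSet.univ]
  simp [volume_unitCube]

lemma cell_eq_setOf_forall_mem_Ico (m : ℕ) (v : Fin d → Fin m) :
    cell d m v = {x | ∀ k, x k ∈ Set.Ico ((v k : ℝ) / m) (((v k : ℝ) + 1) / m)} := rfl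

lemma measurableSet_cell (m : ℕ) (v : Fin d → Fin m) : MeasurableSet (cell d m v) :=
  measurableSet_setOf_forall_mem fun _ => measurableSet_Ico

lemma volume_cell (m : ℕ) (v : Fin d → Fin m) :
    volume (cell d m v) = ENNReal.ofReal (1 / (m : ℝ) ^ d) := by
  have hside : ∀ k, volume (Set.Ico ((v k : ℝ) / m) (((v k : ℝ) + 1) / m))
      = ENNReal.ofReal (1 / m) := by
    intro k
    have hm : (0 : ℝ) < m := by exact_mod_cast (v k).pos
    rw [Real.volume_Ico]
    congr 1
    field_simp
    ring
  rw [cell_eq_setOf_forall_mem_Ico, volume_setOf_forall_mem fun _ => measurableSet_Ico]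
  simp only [hside, prod_const, card_univ, Fintype.card_fin]
  rw [← ENNReal.ofReal_pow (by positivity), one_div_pow]

lemma cell_subset_unitCube (m : ℕ) (v : Fin d → Fin m) : cell d m v ⊆ unitCube d := by
  intro x hx k
  have hm : (0 : ℝ) < m := by exact_mod_cast (v k).pos
  have hv : (v k : ℝ) + 1 ≤ m := by exact_mod_cast (v k).isLt
  have hlo : 0 ≤ (v k : ℝ) / m := by positivity
  have hhi : ((v k : ℝ) + 1) / m ≤ 1 := (div_le_one hm).mpr hv
  exact ⟨hlo.trans (hx k).1, ((hx k).2.trans_le hhi).le⟩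

lemma pairwise_disjoint_cell (m : ℕ) : Pairwise fun u v => Disjoint (cell d m u) (cell d m v) := by
  intro u v huv
  obtain ⟨k, hk⟩ := Function.ne_iff.mp huv
  have hm : (0 : ℝ) < m := by exact_mod_cast (u k).pos
  refine Set.disjoint_left.mpr fun x hu hv => hk (Fin.ext ?_)
  have hlt : ∀ a b : Fin m, (a : ℝ) / m ≤ x k → x k < ((b : ℝ) + 1) / m → (a : ℕ) ≤ b := by
    intro a b ha hb
    have : (a : ℝ) < b + 1 := by
      rw [← div_lt_div_iff_of_pos_right hm]; exact ha.trans_lt hb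
    exact_mod_cast Nat.lt_succ_iff.mp (by exact_mod_cast this)
  exact le_antisymm (hlt _ _ (hu k).1 (hv k).2) (hlt _ _ (hv k).1 (hu k).2)

end Cells

section Binomial

variable {d n : ℕ} {A : Set (EuclideanSpace ℝ (Fin d))}

lemma unifCube_pi_ite (hA : MeasurableSet A) (hAc : A ⊆ unitCube d) (T : Finset (Fin n)) :
    unifCube d n (Set.univ.pi fun i => if i ∈ T then A else Aᶜ)
      = volume A ^ #T * (1 - volume A) ^ (n - #T) := by
  have hA1 : volume A ≤ 1 := volume_unitCube (d := d) ▸ measure_mono hAc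
  have hcompl : volume (Aᶜ ∩ unitCube d) = 1 - volume A := by
    rw [Set.inter_comm, ← Set.sdiff_eq, measure_sdiff hAc hA.nullMeasurableSet
      (hA1.trans_lt ENNReal.one_lt_top).ne, volume_unitCube]
  have hfactor : ∀ i, volume ((if i ∈ T then A else Aᶜ) ∩ unitCube d)
      = if i ∈ T then volume A else 1 - volume A := by
    intro i
    split_ifs
    · rw [Set.inter_eq_self_of_subset_left hAc]
    · exact hcompl
  rw [unifCube_univ_pi n fun i => by split_ifs; exacts [hA, hA.compl]]
  simp only [hfactor, prod_ite, prod_const, filter_mem_eq_inter, univ_inter, filter_not,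
    card_sdiff_of_subset (subset_univ T), card_univ, Fintype.card_fin]

lemma unifCube_ncard_mem_le_le (hA : MeasurableSet A) (hAc : A ⊆ unitCube d) (a : ℕ) :
    unifCube d n {x | {i | x i ∈ A}.ncard ≤ a}
      ≤ ENNReal.ofReal (∑ j ∈ range (a + 1),
          n.choose j * (volume A).toReal ^ j * (1 - (volume A).toReal) ^ (n - j)) := by
  classical
  have hA1 : volume A ≤ 1 := volume_unitCube (d := d) ▸ measure_mono hAc
  have hsub : {x : Fin n → EuclideanSpace ℝ (Fin d) | {i | x i ∈ A}.ncard ≤ a}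
      ⊆ ⋃ j ∈ range (a + 1), ⋃ T ∈ powersetCard j univ,
          Set.univ.pi fun i => if i ∈ T then A else Aᶜ := by
    intro x hx
    set T : Finset (Fin n) := univ.filter fun i => x i ∈ A
    have hT : #T ≤ a := by
      have hset : {i | x i ∈ A} = (T : Set (Fin n)) := by ext; simp [T]
      rwa [Set.mem_ofPred_eq, hset, Set.ncard_coe_finset] at hx
    refine Set.mem_biUnion (mem_range.mpr (Nat.lt_succ_of_le hT)) ?_
    refine Set.mem_biUnion (mem_powersetCard_univ.mpr rfl) fun i _ => ?_
    by_cases hi : x i ∈ A <;> simp [T, hi]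
  calc unifCube d n {x | {i | x i ∈ A}.ncard ≤ a}
      ≤ ∑ j ∈ range (a + 1), ∑ T ∈ powersetCard j (univ : Finset (Fin n)),
          unifCube d n (Set.univ.pi fun i => if i ∈ T then A else Aᶜ) :=
        (measure_mono hsub).trans <| (measure_biUnion_finset_le _ _).trans <|
          sum_le_sum fun j _ => measure_biUnion_finset_le _ _
    _ = ∑ j ∈ range (a + 1), n.choose j * (volume A ^ j * (1 - volume A) ^ (n - j)) := by
        refine sum_congr rfl fun j _ => ?_
        rw [sum_congr rfl fun T hT => by rw [unifCube_pi_ite hA hAc, mem_powersetCard_univ.mp hT],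
          sum_const, card_powersetCard, card_univ, Fintype.card_fin, nsmul_eq_mul]
    _ = _ := by
        have hcompl : 1 - (volume A).toReal = (1 - volume A).toReal := by
          rw [ENNReal.toReal_sub_of_le hA1 ENNReal.one_ne_top, ENNReal.toReal_one]
        rw [hcompl, ENNReal.ofReal_sum_of_nonneg fun j _ => by positivity]
        refine sum_congr rfl fun j _ => ?_
        rw [mul_assoc,
          ENNReal.ofReal_mul (by positivity), ENNReal.ofReal_natCast, ← ENNReal.toReal_pow,
          ← ENNReal.toReal_pow, ← ENNReal.toReal_mul, ENNReal.ofReal_toReal]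
        exact ENNReal.mul_ne_top (ENNReal.pow_ne_top (hA1.trans_lt ENNReal.one_lt_top).ne)
          (ENNReal.pow_ne_top (by simp))

end Binomial

section SparseCells

variable {d n m : ℕ}

lemma ncard_mem_biUnion_cell_le (x : Fin n → EuclideanSpace ℝ (Fin d))
    {S : Finset (Fin d → Fin m)} (hS : ∀ v ∈ S, IsSparse d m n x v) :
    {i | x i ∈ ⋃ v ∈ S, cell d m v}.ncard ≤ #S * (2 * 3 ^ d) := by
  classical
  have hncard : ∀ A : Set (EuclideanSpace ℝ (Fin d)), {i | x i ∈ A}.ncard = #{i | x i ∈ A} := by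
    intro A
    rw [← Set.ncard_coe_finset]
    congr 1
    ext i; simp
  have hunion : ({i | x i ∈ ⋃ v ∈ S, cell d m v} : Finset (Fin n))
      = S.biUnion fun v => {i | x i ∈ cell d m v} := by
    ext i; simp
  rw [hncard, hunion]
  refine card_biUnion_le.trans ?_
  exact (sum_le_sum fun v hv => (hncard _).symm.trans_le (hS v hv)).trans_eq (by simp)

lemma unifCube_le_sparseCount_le (L : ℕ) :
    unifCube d n {x | L ≤ sparseCount d m n x}
      ≤ (m ^ d).choose L * ENNReal.ofReal (∑ j ∈ range (L * (2 * 3 ^ d) + 1),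
          n.choose j * (L / (m : ℝ) ^ d) ^ j * (1 - L / (m : ℝ) ^ d) ^ (n - j)) := by
  classical
  set R := 2 * 3 ^ d
  set U : Finset (Fin d → Fin m) → Set (EuclideanSpace ℝ (Fin d)) := fun S => ⋃ v ∈ S, cell d m v
  have hsub : {x : Fin n → EuclideanSpace ℝ (Fin d) | L ≤ sparseCount d m n x}
      ⊆ ⋃ S ∈ powersetCard L univ, {x | {i | x i ∈ U S}.ncard ≤ L * R} := by
    intro x hx
    have hL : L ≤ #{v | IsSparse d m n x v} := by
      rwa [Set.mem_ofPred_eq, sparseCount, ← coe_filter_univ, Set.ncard_coe_finset] at hx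
    obtain ⟨S, hS, hcard⟩ := exists_subset_card_eq hL
    refine Set.mem_biUnion (mem_powersetCard_univ.mpr hcard) ?_
    have := ncard_mem_biUnion_cell_le x fun v hv => (mem_filter.mp (hS hv)).2
    rwa [hcard] at this
  have hvol : ∀ S ∈ powersetCard L (univ : Finset (Fin d → Fin m)),
      (volume (U S)).toReal = L / (m : ℝ) ^ d := by
    intro S hS
    rw [measure_biUnion_finset (fun u _ v _ huv => pairwise_disjoint_cell m huv)
      fun v _ => measurableSet_cell m v]
    simp [volume_cell, mem_powersetCard_univ.mp hS, div_eq_mul_one_div (L : ℝ)]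
  calc unifCube d n {x | L ≤ sparseCount d m n x}
      ≤ ∑ S ∈ powersetCard L univ, unifCube d n {x | {i | x i ∈ U S}.ncard ≤ L * R} :=
        (measure_mono hsub).trans (measure_biUnion_finset_le _ _)
    _ ≤ ∑ S ∈ powersetCard L univ, ENNReal.ofReal (∑ j ∈ range (L * R + 1),
          n.choose j * (L / (m : ℝ) ^ d) ^ j * (1 - L / (m : ℝ) ^ d) ^ (n - j)) := by
        refine sum_le_sum fun S hS => ?_
        rw [← hvol S hS]
        exact unifCube_ncard_mem_le_le
          (MeasurableSet.biUnion S.countable_toSet fun v _ => measurableSet_cell m v)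
          (Set.iUnion₂_subset fun v _ => cell_subset_unitCube m v) _
    _ = _ := by simp

end SparseCells

section Estimates

open Real Nat

lemma pow_div_factorial_le_exp_mul_div_pow {x : ℝ} (hx : 0 ≤ x) (k : ℕ) :
    x ^ k / k ! ≤ (exp 1 * x / k) ^ k := by
  rcases k.eq_zero_or_pos with rfl | hk
  · simp
  have hk' : (0 : ℝ) < k := by exact_mod_cast hk
  calc x ^ k / k ! = (x / k) ^ k * ((k : ℝ) ^ k / k !) := by rw [div_pow]; field_simp
    _ ≤ (x / k) ^ k * exp 1 ^ k := by
        rw [← exp_nat_mul, mul_one]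
        gcongr
        exact pow_div_factorial_le_exp _ hk'.le k
    _ = (exp 1 * x / k) ^ k := by rw [← mul_pow]; ring

lemma choose_le_exp_mul_div_pow (n k : ℕ) : (n.choose k : ℝ) ≤ (exp 1 * n / k) ^ k :=
  (choose_le_pow_div k n).trans (pow_div_factorial_le_exp_mul_div_pow n.cast_nonneg k)

lemma pow_div_factorial_le_pow_div_factorial {x : ℝ} {j a : ℕ} (hja : j ≤ a) (hax : a ≤ x) :
    x ^ j / j ! ≤ x ^ a / a ! := by
  induction a, hja using Nat.le_induction with
  | base => rfl
  | succ a _ ih =>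
    have hx : (a : ℝ) + 1 ≤ x := by exact_mod_cast hax
    have hpos : (0 : ℝ) < a + 1 := by positivity
    have hx0 : 0 ≤ x := by linarith
    calc x ^ j / j ! ≤ x ^ a / a ! := ih (by linarith)
      _ ≤ x ^ a / a ! * (x / (a + 1)) := le_mul_of_one_le_right (by positivity [hx0])
          ((one_le_div hpos).mpr hx)
      _ = x ^ (a + 1) / (a + 1)! := by push_cast [factorial_succ]; field_simp; ring

lemma sum_choose_mul_pow_mul_pow_le {n a : ℕ} {p : ℝ} (hp0 : 0 ≤ p) (hp1 : p ≤ 1)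
    (hanp : a ≤ n * p) :
    ∑ j ∈ Finset.range (a + 1), n.choose j * p ^ j * (1 - p) ^ (n - j)
      ≤ (a + 1) * ((exp 1 * (n * p) / a) ^ a * exp (p * a - n * p)) := by
  have han : a ≤ n := by
    have : (a : ℝ) ≤ n := hanp.trans (mul_le_of_le_one_right n.cast_nonneg hp1)
    exact_mod_cast this
  have hterm : ∀ j ∈ Finset.range (a + 1), n.choose j * p ^ j * (1 - p) ^ (n - j)
      ≤ (exp 1 * (n * p) / a) ^ a * exp (p * a - n * p) := by
    intro j hj
    have hja : j ≤ a := Nat.lt_succ_iff.mp (Finset.mem_range.mp hj)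
    have hchoose : n.choose j * p ^ j ≤ (n * p) ^ a / a ! :=
      calc n.choose j * p ^ j ≤ n ^ j / j ! * p ^ j := by gcongr; exact choose_le_pow_div j n
        _ = (n * p) ^ j / j ! := by ring
        _ ≤ (n * p) ^ a / a ! := pow_div_factorial_le_pow_div_factorial hja hanp
    have hmiss : (1 - p) ^ (n - j) ≤ exp (p * a - n * p) :=
      calc (1 - p) ^ (n - j) ≤ (1 - p) ^ (n - a) :=
            pow_le_pow_of_le_one (by linarith) (by linarith) (Nat.sub_le_sub_left hja n)
        _ ≤ exp (-p) ^ (n - a) := by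
            gcongr
            linarith [add_one_le_exp (-p)]
        _ = exp (p * a - n * p) := by
            rw [← exp_nat_mul, Nat.cast_sub han]
            ring_nf
    calc n.choose j * p ^ j * (1 - p) ^ (n - j)
        ≤ (n * p) ^ a / a ! * exp (p * a - n * p) :=
          mul_le_mul hchoose hmiss (pow_nonneg (by linarith) _) (by positivity)
      _ ≤ _ := by gcongr; exact pow_div_factorial_le_exp_mul_div_pow (by positivity) a
  refine (Finset.sum_le_sum hterm).trans_eq ?_
  rw [Finset.sum_const, Finset.card_range, nsmul_eq_mul]
  push_cast
  ring

def IsLargeCellMean (R : ℕ) (K : ℝ) : Prop :=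
  R ≤ K ∧ K * R * exp (-K / 2) ≤ 1 ∧ exp 3 * (exp 1 / R) ^ R * K ^ (R - 1) * exp (-K / 2) ≤ 1 / 2

lemma eventually_isLargeCellMean (R : ℕ) : ∀ᶠ K in atTop, IsLargeCellMean R K := by
  have hlim (c : ℝ) (k : ℕ) :
      Tendsto (fun K : ℝ => c * (K ^ k * exp (-K / 2))) atTop (nhds 0) := by
    simpa only [mul_zero] using
      ((tendsto_rpow_mul_exp_neg_mul_atTop_nhds_zero k (1 / 2) one_half_pos).congr fun K => by
        rw [rpow_natCast]; ring_nf).const_mul c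
  filter_upwards [eventually_ge_atTop (R : ℝ), (hlim R 1).eventually_lt_const one_pos,
    (hlim (exp 3 * (exp 1 / R) ^ R) (R - 1)).eventually_lt_const one_half_pos]
    with K hRK hKR hsmall
  rw [pow_one] at hKR
  exact ⟨hRK, by linarith, by linarith⟩

lemma exp_one_mul_div_mul_pow_mul_exp_le_half {R : ℕ} (hR : 1 ≤ R) {K M L : ℝ}
    (hK : IsLargeCellMean R K) (hRM : R ≤ M) (hL : exp (-K / 2) * (K * M) ≤ L)
    (hL' : L ≤ exp (-K / 2) * (K * M) + 1) :
    exp 1 * M / L * (exp 1 * K / R) ^ R * exp (L * R / M - K) ≤ 1 / 2 := by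
  obtain ⟨hRK, hKR, hsmall⟩ := hK
  have hR0 : (0 : ℝ) < R := by exact_mod_cast hR
  have hK0 : 0 < K := hR0.trans_le hRK
  have hM : 0 < M := hR0.trans_le hRM
  have hL0 : 0 < L := lt_of_lt_of_le (by positivity) hL
  have hexp : exp (K / 2) * exp (-K / 2) = 1 := by rw [← exp_add]; ring_nf; exact exp_zero
  have hML : M / L ≤ exp (K / 2) / K := by
    rw [div_le_div_iff₀ hL0 hK0]
    calc M * K = exp (K / 2) * (exp (-K / 2) * (K * M)) := by rw [← mul_assoc, hexp]; ring
      _ ≤ exp (K / 2) * L := by gcongr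
  have hLR : L * R / M ≤ 2 := by
    rw [div_le_iff₀ hM]
    calc L * R ≤ (exp (-K / 2) * (K * M) + 1) * R := by gcongr
      _ = K * R * exp (-K / 2) * M + R := by ring
      _ ≤ 1 * M + M := by gcongr
      _ = 2 * M := by ring
  calc exp 1 * M / L * (exp 1 * K / R) ^ R * exp (L * R / M - K)
      ≤ exp 1 * (exp (K / 2) / K) * (exp 1 * K / R) ^ R * exp (2 - K) := by
        rw [mul_div_assoc]; gcongr
    _ = exp 3 * (exp 1 / R) ^ R * K ^ (R - 1) * exp (-K / 2) := by
        obtain ⟨r, rfl⟩ : ∃ r, R = r + 1 := ⟨R - 1, by omega⟩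
        have h2K : exp (2 - K) = exp 2 * exp (-K / 2) / exp (K / 2) := by
          rw [eq_div_iff (exp_pos _).ne', ← exp_add, ← exp_add]; ring_nf
        have h3 : exp 3 = exp 1 * exp 2 := by rw [← exp_add]; norm_num
        rw [h2K, h3, Nat.add_sub_cancel]
        field_simp
        ring
    _ ≤ 1 / 2 := hsmall

end Estimates

open Real in
lemma unifCube_le_sparseCount_le_half_pow {d n m L : ℕ} {K : ℝ} (hK : K = n / (m : ℝ) ^ d)
    (hlarge : IsLargeCellMean (2 * 3 ^ d) K) (hRM : ((2 * 3 ^ d : ℕ) : ℝ) ≤ (m : ℝ) ^ d)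
    (hL : exp (-K / 2) * n ≤ L) (hL' : L ≤ exp (-K / 2) * n + 1) :
    unifCube d n {x | L ≤ sparseCount d m n x}
      ≤ ENNReal.ofReal ((L * (2 * 3 ^ d : ℕ) + 1) * (1 / 2) ^ L) := by
  set R := 2 * 3 ^ d
  set M : ℝ := (m : ℝ) ^ d
  have hR : 2 ≤ R := le_mul_of_one_le_right zero_le_two (Nat.one_le_pow _ _ three_pos)
  have hR2 : (2 : ℝ) ≤ R := by exact_mod_cast hR
  have hM : 0 < M := by linarith
  have hn : (n : ℝ) = K * M := by rw [hK, div_mul_cancel₀ _ hM.ne']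
  rw [hn] at hL hL'
  have hK0 : 0 < K := by linarith [hlarge.1]
  have hL0 : (0 : ℝ) < L := lt_of_lt_of_le (by positivity) hL
  have hLM : (L : ℝ) ≤ M := by
    have : exp (-K / 2) * (K * M) ≤ M / 2 := by
      rw [le_div_iff₀ two_pos]
      nlinarith [hlarge.2.1, exp_pos (-K / 2)]
    linarith
  have hp1 : (L : ℝ) / M ≤ 1 := (div_le_one hM).mpr hLM
  have hanp : ((L * R : ℕ) : ℝ) ≤ n * (L / M) := by
    rw [hn, Nat.cast_mul, show K * M * (L / M) = L * K by field_simp]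
    exact mul_le_mul_of_nonneg_left hlarge.1 L.cast_nonneg
  calc unifCube d n {x | L ≤ sparseCount d m n x}
      ≤ (m ^ d).choose L * ENNReal.ofReal (∑ j ∈ Finset.range (L * R + 1),
          n.choose j * (L / M) ^ j * (1 - L / M) ^ (n - j)) := unifCube_le_sparseCount_le L
    _ ≤ ENNReal.ofReal ((exp 1 * M / L) ^ L * ((L * R + 1) *
          ((exp 1 * (n * (L / M)) / (L * R : ℕ)) ^ (L * R)
            * exp (L / M * (L * R : ℕ) - n * (L / M))))) := by
        rw [← ENNReal.ofReal_natCast, ← ENNReal.ofReal_mul (Nat.cast_nonneg _)]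
        gcongr
        · simpa [M] using choose_le_exp_mul_div_pow (m ^ d) L
        · simpa using sum_choose_mul_pow_mul_pow_le (by positivity) hp1 hanp
    _ = ENNReal.ofReal ((L * R + 1) *
          (exp 1 * M / L * (exp 1 * K / R) ^ R * exp (L * R / M - K)) ^ L) := by
        congr 1
        clear_value R M
        rw [hn, mul_pow, mul_pow, ← pow_mul, ← exp_nat_mul, Nat.cast_mul]
        field_simp
        ring_nf
    _ ≤ ENNReal.ofReal ((L * R + 1) * (1 / 2) ^ L) := by
        gcongr
        exact exp_one_mul_div_mul_pow_mul_exp_le_half (by omega) hlarge (by exact_mod_cast hRM)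
          hL hL'

lemma tendsto_unifCube_nhds_one {d : ℕ} {s : ∀ n, Set (Fin n → EuclideanSpace ℝ (Fin d))}
    {g : ℕ → ENNReal} (hg : Tendsto g atTop (nhds 0))
    (hs : ∀ᶠ n in atTop, unifCube d n (s n)ᶜ ≤ g n) :
    Tendsto (fun n => unifCube d n (s n)) atTop (nhds 1) := by
  have hlow : Tendsto (fun n => 1 - g n) atTop (nhds 1) := by
    simpa using ENNReal.Tendsto.sub tendsto_const_nhds hg (Or.inl ENNReal.one_ne_top)
  refine tendsto_of_tendsto_of_tendsto_of_le_of_le' hlow tendsto_const_nhds ?_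
    (Eventually.of_forall fun n => prob_le_one)
  filter_upwards [hs] with n hn
  rw [tsub_le_iff_right]
  calc 1 = unifCube d n (s n ∪ (s n)ᶜ) := by rw [Set.union_compl_self, measure_univ]
    _ ≤ unifCube d n (s n) + unifCube d n (s n)ᶜ := measure_union_le _ _
    _ ≤ unifCube d n (s n) + g n := by gcongr

lemma tendsto_mul_add_one_mul_pow {r : ℝ} (hr0 : 0 ≤ r) (hr1 : r < 1) (c : ℝ) :
    Tendsto (fun k : ℕ => (k * c + 1) * r ^ k) atTop (nhds 0) := by
  have h := ((tendsto_self_mul_const_pow_of_lt_one hr0 hr1).mul_const c).add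
    (tendsto_pow_atTop_nhds_zero_of_lt_one hr0 hr1)
  simpa only [zero_mul, add_zero, add_mul, one_mul, mul_right_comm _ c] using h

lemma eventually_cellMean_bounds {d : ℕ} (hd : d ≠ 0) {a C : ℝ} (ha : 0 < a) (hC : 0 < C) (R : ℝ) :
    ∀ᶠ n : ℕ in atTop,
      C / (2 * a) ^ d ≤ n / (⌈a / (C / n) ^ ((1 : ℝ) / d)⌉₊ : ℝ) ^ d ∧
      n / (⌈a / (C / n) ^ ((1 : ℝ) / d)⌉₊ : ℝ) ^ d ≤ C / a ^ d ∧
      R ≤ (⌈a / (C / n) ^ ((1 : ℝ) / d)⌉₊ : ℝ) ^ d := by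
  set t : ℕ → ℝ := fun n => a / (C / n) ^ ((1 : ℝ) / d)
  have ht_eq : t = fun n : ℕ => a * ((n : ℝ) / C) ^ ((1 : ℝ) / d) := by
    funext n
    change a / (C / n) ^ ((1 : ℝ) / d) = _
    rw [div_eq_mul_inv, ← Real.inv_rpow (by positivity), inv_div]
  have ht : Tendsto t atTop atTop := by
    rw [ht_eq]
    exact ((tendsto_rpow_atTop (by positivity)).comp
      (tendsto_natCast_atTop_atTop.atTop_div_const hC)).const_mul_atTop ha
  have ht_pow : ∀ n : ℕ, t n ^ d = a ^ d * n / C := by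
    intro n
    rw [div_pow, one_div, Real.rpow_inv_natCast_pow (by positivity) hd]
    rcases n.eq_zero_or_pos with rfl | hn
    · simp
    · field_simp
  filter_upwards [ht.eventually_ge_atTop 1, ht.eventually_ge_atTop R] with n ht1 htR

  have hm_lo : t n ≤ ⌈t n⌉₊ := Nat.le_ceil _
  have hm_hi : (⌈t n⌉₊ : ℝ) ≤ 2 * t n := by linarith [Nat.ceil_lt_add_one (by linarith : 0 ≤ t n)]
  refine ⟨?_, ?_, ?_⟩
  · rw [le_div_iff₀ (by positivity), ← le_div_iff₀' (by positivity)]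
    calc (⌈t n⌉₊ : ℝ) ^ d ≤ (2 * t n) ^ d := by gcongr
      _ = n / (C / (2 * a) ^ d) := by rw [mul_pow, ht_pow, mul_pow]; field_simp
  · rw [div_le_iff₀ (by positivity), ← div_le_iff₀' (by positivity)]
    calc n / (C / a ^ d) = t n ^ d := by rw [ht_pow]; field_simp
      _ ≤ (⌈t n⌉₊ : ℝ) ^ d := by gcongr
  · exact htR.trans (hm_lo.trans (le_self_pow₀ (by linarith) hd))

open Real in
/-- For every `d ≥ 1` there is `C₀` such that for every `C ≥ C₀`, with `r = (C/n)^{1/d}`,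
`s = 1/⌈2√d/r⌉` and `K = s^d·n`, a.a.s. the number of cells of the side-`s` tessellation
of `[0,1]^d` that are sparse with respect to `n` uniform points is at most `e^{-K/2}·n`. -/
theorem aas_few_sparse_cells (d : ℕ) (hd : 1 ≤ d) :
    ∃ C₀ : ℝ, ∀ C : ℝ, C₀ ≤ C →
    Tendsto
      (fun n : ℕ =>
        unifCube d n
          {x |
            ((sparseCount d (⌈2 * Real.sqrt d / ((C / n) ^ ((1 : ℝ) / d))⌉₊) n x : ℝ))
              ≤ Real.exp
                  (-((n : ℝ) /
                      ((⌈2 * Real.sqrt d / ((C / n) ^ ((1 : ℝ) / d))⌉₊ : ℝ) ^ d)) / 2)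
                  * n})
      atTop (nhds (1 : ENNReal)) := by
  obtain ⟨K₀, hK₀⟩ := (eventually_isLargeCellMean (2 * 3 ^ d)).exists_forall_of_atTop
  have ha : 0 < 2 * √d := by positivity
  refine ⟨(2 * (2 * √d)) ^ d * max K₀ 1, fun C hC => ?_⟩
  have hK₀C : max K₀ 1 ≤ C / (2 * (2 * √d)) ^ d := by rw [le_div_iff₀' (by positivity)]; exact hC
  have hC0 : 0 < C := lt_of_lt_of_le (by positivity) hC
  set m : ℕ → ℕ := fun n => ⌈2 * √d / (C / n) ^ ((1 : ℝ) / d)⌉₊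
  set K : ℕ → ℝ := fun n => n / (m n : ℝ) ^ d
  set L : ℕ → ℕ := fun n => ⌊exp (-K n / 2) * n⌋₊ + 1
  have hscale := eventually_cellMean_bounds (Nat.one_le_iff_ne_zero.mp hd) ha hC0 (2 * 3 ^ d : ℕ)
  have hL : ∀ n, exp (-K n / 2) * n ≤ L n ∧ L n ≤ exp (-K n / 2) * n + 1 := fun n =>
    ⟨by push_cast [L]; exact (Nat.lt_floor_add_one _).le,
      by push_cast [L]; linarith [Nat.floor_le (by positivity : 0 ≤ exp (-K n / 2) * n)]⟩
  have hL_tendsto : Tendsto L atTop atTop := by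
    rw [← tendsto_natCast_atTop_iff (R := ℝ)]
    refine tendsto_atTop_mono' atTop ?_
      (tendsto_natCast_atTop_atTop.const_mul_atTop (exp_pos (-(C / (2 * √d) ^ d) / 2)))
    filter_upwards [hscale] with n hKn
    exact le_trans (by gcongr; exact hKn.2.1) (hL n).1
  have hbound := (tendsto_mul_add_one_mul_pow (r := 1 / 2) (by norm_num) (by norm_num)
    ((2 * 3 ^ d : ℕ) : ℝ)).comp hL_tendsto
  refine tendsto_unifCube_nhds_one (ENNReal.ofReal_zero ▸ ENNReal.tendsto_ofReal hbound) ?_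
  filter_upwards [hscale] with n hKn
  refine le_trans (measure_mono fun x hx => ?_) (unifCube_le_sparseCount_le_half_pow rfl
    (hK₀ _ ((le_max_left _ _).trans (hK₀C.trans hKn.1))) hKn.2.2 (hL n).1 (hL n).2)
  exact (Nat.floor_lt (by positivity)).mpr (lt_of_not_ge hx)
end

section
/- Let d ≥ 1 be an integer, let s > 0 with 1/s a positive integer, tessellate [0,1]^d into the s^{−d} cells of side s, let P be a set of n points of [0,1]^d none lying on a cell boundary, and set K := s^d·n. Let Γ be the graph whose vertices are the cells dense with respect to P, with two cells adjacent whenever they are friends. Then every connected component γ of Γ with fewer than n^{1/d}/(4K^{1/d}) vertices has the property that at least 2^d − 1 distinct cells sparse with respect to P are friends with some cell of γ. -/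
/-- Two cells are friends if their closures intersect. -/
def IsFriend (d m : ℕ) (v w : Fin d → Fin m) : Prop :=
  (closure (cell d m v) ∩ closure (cell d m w)).Nonempty

/-- The graph `Γ` whose vertices are the dense cells, two of them adjacent whenever they
are friends. -/
def denseGraph (d m n : ℕ) (x : Fin n → EuclideanSpace ℝ (Fin d)) :
    SimpleGraph {v : Fin d → Fin m // ¬ IsSparse d m n x v} :=
  SimpleGraph.fromRel fun v w => IsFriend d m v.1 w.1

lemma cell_eq_preimage_pi (d m : ℕ) (v : Fin d → Fin m) :
    cell d m v = EuclideanSpace.equiv (Fin d) ℝ ⁻¹'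
      Set.univ.pi fun k => Set.Ico ((v k : ℝ) / m) (((v k : ℝ) + 1) / m) := by
  ext x; simp [cell]

lemma closure_cell (d m : ℕ) (hm : 0 < m) (v : Fin d → Fin m) :
    closure (cell d m v) = EuclideanSpace.equiv (Fin d) ℝ ⁻¹'
      Set.univ.pi fun k => Set.Icc ((v k : ℝ) / m) (((v k : ℝ) + 1) / m) := by
  rw [cell_eq_preimage_pi, ← ContinuousLinearEquiv.preimage_closure, closure_pi_set]
  congr! 3 with k
  have hm' : (0 : ℝ) < m := by exact_mod_cast hm
  exact closure_Ico (div_lt_div_of_pos_right (lt_add_one _) hm').ne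

lemma isFriend_iff (d m : ℕ) (hm : 0 < m) (v w : Fin d → Fin m) :
    IsFriend d m v w ↔ ∀ k, (v k : ℕ) ≤ w k + 1 ∧ (w k : ℕ) ≤ v k + 1 := by
  have hm' : (0 : ℝ) < m := by exact_mod_cast hm
  rw [IsFriend, closure_cell d m hm, closure_cell d m hm, ← Set.preimage_inter,
    (EuclideanSpace.equiv (Fin d) ℝ).surjective.nonempty_preimage, ← Set.pi_inter_distrib,
    Set.univ_pi_nonempty_iff]
  refine forall_congr' fun k => ?_
  rw [Set.Icc_inter_Icc, Set.nonempty_Icc, le_inf_iff, max_le_iff, max_le_iff]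
  simp only [div_le_div_iff_of_pos_right hm']
  constructor
  · rintro ⟨⟨-, h₁⟩, h₂, -⟩; exact ⟨by exact_mod_cast h₂, by exact_mod_cast h₁⟩
  · rintro ⟨h₁, h₂⟩
    exact ⟨⟨by linarith, by exact_mod_cast h₂⟩, by exact_mod_cast h₁, by linarith⟩

namespace SimpleGraph

variable {V : Type*} {G : SimpleGraph V} {f : V → ℕ}

theorem Walk.exists_mem_support_apply_eq (hf : ∀ ⦃a b⦄, G.Adj a b → f b ≤ f a + 1)
    {u w : V} (p : G.Walk u w) {c : ℕ} (huc : f u ≤ c) (hcw : c ≤ f w) :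
    ∃ z ∈ p.support, f z = c := by
  induction p with
  | nil => exact ⟨_, Walk.start_mem_support _, le_antisymm huc hcw⟩
  | @cons a b w hab q ih =>
    by_cases hac : f a = c
    · exact ⟨a, q.cons hab |>.start_mem_support, hac⟩
    · obtain ⟨z, hz, rfl⟩ := ih (by have := hf hab; omega) hcw
      exact ⟨z, List.mem_cons_of_mem _ hz, rfl⟩

theorem ConnectedComponent.Icc_subset_image_supp (hf : ∀ ⦃a b⦄, G.Adj a b → f b ≤ f a + 1)
    (C : G.ConnectedComponent) {u w : V} (hu : u ∈ C.supp) (hw : w ∈ C.supp) :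
    Set.Icc (f u) (f w) ⊆ f '' C.supp := by
  rintro c ⟨huc, hcw⟩
  obtain ⟨p⟩ := C.reachable_of_mem_supp hu hw
  obtain ⟨z, hz, rfl⟩ := p.exists_mem_support_apply_eq hf huc hcw
  refine ⟨z, ?_, rfl⟩
  classical
  rw [C.mem_supp_iff, ← (C.mem_supp_iff u).mp hu]
  exact ConnectedComponent.sound (p.takeUntil z hz).reachable.symm

theorem ConnectedComponent.sub_add_one_le_ncard_supp [Finite V]
    (hf : ∀ ⦃a b⦄, G.Adj a b → f b ≤ f a + 1)
    (C : G.ConnectedComponent) {u w : V} (hu : u ∈ C.supp) (hw : w ∈ C.supp) :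
    f w + 1 - f u ≤ C.supp.ncard :=
  calc f w + 1 - f u = (Set.Icc (f u) (f w)).ncard := (Set.ncard_Icc_nat _ _).symm
    _ ≤ (f '' C.supp).ncard := Set.ncard_le_ncard (C.Icc_subset_image_supp hf hu hw)
    _ ≤ C.supp.ncard := Set.ncard_image_le (Set.toFinite _)

end SimpleGraph

theorem Finset.injective_piecewise {ι β : Type*} [DecidableEq ι] {f g : ι → β}
    (hfg : ∀ i, f i ≠ g i) : Function.Injective fun S : Finset ι => S.piecewise f g := by
  intro S T hST
  ext i
  have hi := congrFun hST i
  by_cases hS : i ∈ S <;> by_cases hT : i ∈ T <;> simp_all [hfg i, (hfg i).symm]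

section Cells

variable {d m n : ℕ} {x : Fin n → EuclideanSpace ℝ (Fin d)}

theorem denseGraph_adj_le (hm : 0 < m) {v w : {v : Fin d → Fin m // ¬ IsSparse d m n x v}}
    (h : (denseGraph d m n x).Adj v w) (k : Fin d) : (w.1 k : ℕ) ≤ v.1 k + 1 := by
  rcases (SimpleGraph.fromRel_adj _ _ _).mp h with ⟨-, hvw | hwv⟩
  · exact ((isFriend_iff d m hm _ _).mp hvw k).2
  · exact ((isFriend_iff d m hm _ _).mp hwv k).1

theorem mem_supp_of_isFriend {γ : (denseGraph d m n x).ConnectedComponent}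
    {c : {v : Fin d → Fin m // ¬ IsSparse d m n x v}} (hc : c ∈ γ.supp)
    {w : Fin d → Fin m} (hw : ¬ IsSparse d m n x w) (hne : w ≠ c.1)
    (hfr : IsFriend d m w c.1) : ⟨w, hw⟩ ∈ γ.supp := by
  have hadj : (denseGraph d m n x).Adj ⟨w, hw⟩ c :=
    (SimpleGraph.fromRel_adj _ _ _).mpr ⟨fun h => hne (congrArg Subtype.val h), .inl hfr⟩
  exact (γ.mem_supp_congr_adj hadj).mpr hc

theorem forall_lt_or_forall_pos_of_ncard_supp_lt (hm : 0 < m)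
    (γ : (denseGraph d m n x).ConnectedComponent) (hγ : γ.supp.ncard < m) (k : Fin d) :
    (∀ v ∈ γ.supp, (v.1 k : ℕ) + 1 < m) ∨ ∀ v ∈ γ.supp, 0 < (v.1 k : ℕ) := by
  by_contra! ⟨⟨u, hu, hmu⟩, ⟨w, hw, hw0⟩⟩
  have := γ.sub_add_one_le_ncard_supp (f := fun v => (v.1 k : ℕ))
    (fun _ _ h => denseGraph_adj_le hm h k) hw hu
  omega

theorem exists_sign_forall_mem_supp (hm : 0 < m)
    (γ : (denseGraph d m n x).ConnectedComponent) (hγ : γ.supp.ncard < m) :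
    ∃ σ : Fin d → ℤ, (∀ k, σ k = 1 ∨ σ k = -1) ∧
      ∀ v ∈ γ.supp, ∀ k, 0 ≤ (v.1 k : ℤ) + σ k ∧ (v.1 k : ℤ) + σ k < m := by
  have : ∀ k, ∃ s : ℤ, (s = 1 ∨ s = -1) ∧
      ∀ v ∈ γ.supp, 0 ≤ (v.1 k : ℤ) + s ∧ (v.1 k : ℤ) + s < m := by
    intro k
    rcases forall_lt_or_forall_pos_of_ncard_supp_lt hm γ hγ k with h | h
    · exact ⟨1, .inl rfl, fun v hv => by have := h v hv; omega⟩
    · exact ⟨-1, .inr rfl, fun v hv => by have := h v hv; have := (v.1 k).isLt; omega⟩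
  choose σ hσ using this
  exact ⟨σ, fun k => (hσ k).1, fun v hv k => (hσ k).2 v hv⟩

theorem sum_mul_lt_sum_mul_piecewise {σ : Fin d → ℤ} (hσ : ∀ k, σ k = 1 ∨ σ k = -1)
    {v t : Fin d → Fin m} (ht : ∀ k, (t k : ℤ) = v k + σ k) {S : Finset (Fin d)}
    (hS : S.Nonempty) :
    ∑ k, σ k * (v k : ℤ) < ∑ k, σ k * (S.piecewise t v k : ℤ) := by
  have key : ∀ k ∈ S, σ k * (v k : ℤ) < σ k * (t k : ℤ) := by
    intro k _
    rw [ht]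
    rcases hσ k with h | h <;> rw [h] <;> omega
  obtain ⟨k, hk⟩ := hS
  refine Finset.sum_lt_sum (fun j _ => ?_) ⟨k, Finset.mem_univ _, by simpa [hk] using key k hk⟩
  by_cases hj : j ∈ S
  · simpa [hj] using (key j hj).le
  · simp [hj]

theorem isSparse_of_isFriend_of_lt {β : Type*} [Preorder β] {W : (Fin d → Fin m) → β}
    {γ : (denseGraph d m n x).ConnectedComponent}
    {c : {v : Fin d → Fin m // ¬ IsSparse d m n x v}} (hc : c ∈ γ.supp)
    (hmax : ∀ v ∈ γ.supp, W v.1 ≤ W c.1) {w : Fin d → Fin m} (hfr : IsFriend d m w c.1)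
    (hlt : W c.1 < W w) : IsSparse d m n x w := by
  by_contra hw
  have hne : w ≠ c.1 := by rintro rfl; exact hlt.false
  exact (hmax _ (mem_supp_of_isFriend hc hw hne hfr)).not_gt hlt

theorem two_pow_sub_one_le_ncard_sparse_friends (hm : 0 < m)
    (γ : (denseGraph d m n x).ConnectedComponent) (hγ : γ.supp.ncard < m) :
    2 ^ d - 1 ≤ {w : Fin d → Fin m | IsSparse d m n x w ∧
        ∃ c : {v : Fin d → Fin m // ¬ IsSparse d m n x v},
          (denseGraph d m n x).connectedComponentMk c = γ ∧ IsFriend d m w c.1}.ncard := by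
  obtain ⟨σ, hσ, hrange⟩ := exists_sign_forall_mem_supp hm γ hγ
  obtain ⟨c, hc, hmax⟩ := γ.supp.exists_max_image (fun v => ∑ k, σ k * (v.1 k : ℤ))
    (Set.toFinite _) γ.nonempty_supp
  let t : Fin d → Fin m := fun k =>
    ⟨((c.1 k : ℤ) + σ k).toNat, by have := hrange c hc k; omega⟩
  have ht : ∀ k, (t k : ℤ) = c.1 k + σ k := fun k => by
    have := hrange c hc k; simp only [t]; omega
  have htc : ∀ k, t k ≠ c.1 k := fun k h => by
    have := ht k; rw [h] at this; rcases hσ k with h | h <;> omega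
  have hfriend : ∀ S : Finset (Fin d), IsFriend d m (S.piecewise t c.1) c.1 := by
    refine fun S => (isFriend_iff d m hm _ _).mpr fun k => ?_
    have := ht k
    by_cases hk : k ∈ S
    · rw [S.piecewise_eq_of_mem _ _ hk]; rcases hσ k with h | h <;> omega
    · rw [S.piecewise_eq_of_notMem _ _ hk]; omega
  calc 2 ^ d - 1 = ({∅}ᶜ : Set (Finset (Fin d))).ncard := by
        rw [Set.ncard_compl, Set.ncard_singleton, Nat.card_eq_fintype_card, Fintype.card_finset,
          Fintype.card_fin]
    _ ≤ _ := by
      refine Set.ncard_le_ncard_of_injOn (fun S => S.piecewise t c.1)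
        (fun S hS => ⟨?_, c, hc, hfriend S⟩) (Finset.injective_piecewise htc).injOn
      exact isSparse_of_isFriend_of_lt (W := fun v => ∑ k, σ k * (v k : ℤ)) hc hmax (hfriend S)
        (sum_mul_lt_sum_mul_piecewise hσ ht (Finset.nonempty_iff_ne_empty.2 hS))

end Cells

theorem rpow_one_div_div_four_mul_rpow_le {d m : ℕ} (hd : 1 ≤ d) (hm : 0 < m) (n : ℕ) :
    (n : ℝ) ^ ((1 : ℝ) / d) / (4 * ((n : ℝ) / (m : ℝ) ^ d) ^ ((1 : ℝ) / d)) ≤ m / 4 := by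
  have hm' : (0 : ℝ) < m := by exact_mod_cast hm
  have hroot : (((m : ℝ) ^ d) ^ ((1 : ℝ) / d)) = m := by
    rw [← Real.rpow_natCast, ← Real.rpow_mul hm'.le, mul_one_div_cancel (by positivity),
      Real.rpow_one]
  rw [Real.div_rpow (Nat.cast_nonneg n) (by positivity), hroot]
  rcases (Real.rpow_nonneg (Nat.cast_nonneg n) ((1 : ℝ) / d)).eq_or_lt with h | h
  · -- `n = 0`, where the left side is `0 / 0 = 0`
    rw [← h, zero_div]; positivity
  · exact (show _ = (m : ℝ) / 4 by field_simp).le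

theorem small_component_has_many_sparse_friends_general (d : ℕ) (hd : 1 ≤ d)
    (m n : ℕ) (hm : 0 < m)
    (x : Fin n → EuclideanSpace ℝ (Fin d))
    (K : ℝ) (hK : K = (n : ℝ) / (m : ℝ) ^ d)
    (γ : (denseGraph d m n x).ConnectedComponent)
    (hsmall : ({v : {v : Fin d → Fin m // ¬ IsSparse d m n x v} |
        (denseGraph d m n x).connectedComponentMk v = γ}.ncard : ℝ)
        < (n : ℝ) ^ ((1 : ℝ) / d) / (4 * K ^ ((1 : ℝ) / d))) :
    2 ^ d - 1 ≤
      {w : Fin d → Fin m | IsSparse d m n x w ∧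
        ∃ c : {v : Fin d → Fin m // ¬ IsSparse d m n x v},
          (denseGraph d m n x).connectedComponentMk c = γ ∧
          IsFriend d m w c.1}.ncard := by
  have hquarter : (γ.supp.ncard : ℝ) < m / 4 :=
    hsmall.trans_le (hK ▸ rpow_one_div_div_four_mul_rpow_le hd hm n)
  have hγ : (γ.supp.ncard : ℝ) < m := by linarith
  exact two_pow_sub_one_le_ncard_sparse_friends hm γ (by exact_mod_cast hγ)

/-- Every connected component of `Γ` with fewer than `n^{1/d}/(4K^{1/d})` vertices has at
least `2^d - 1` sparse cells which are friends with some of its cells. -/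
theorem small_component_has_many_sparse_friends (d : ℕ) (hd : 1 ≤ d)
    (m n : ℕ) (hm : 0 < m)
    (x : Fin n → EuclideanSpace ℝ (Fin d)) (hinj : Function.Injective x)
    (hx : ∀ i : Fin n, ∀ k : Fin d, x i k ∈ Set.Icc (0 : ℝ) 1)
    (hbd : ∀ i : Fin n, ∀ k : Fin d, ∀ j : ℕ, x i k * m ≠ j)
    (K : ℝ) (hK : K = (n : ℝ) / (m : ℝ) ^ d)
    (γ : (denseGraph d m n x).ConnectedComponent)
    (hsmall : ({v : {v : Fin d → Fin m // ¬ IsSparse d m n x v} |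
        (denseGraph d m n x).connectedComponentMk v = γ}.ncard : ℝ)
        < (n : ℝ) ^ ((1 : ℝ) / d) / (4 * K ^ ((1 : ℝ) / d))) :
    2 ^ d - 1 ≤
      {w : Fin d → Fin m | IsSparse d m n x w ∧
        ∃ c : {v : Fin d → Fin m // ¬ IsSparse d m n x v},
          (denseGraph d m n x).connectedComponentMk c = γ ∧
          IsFriend d m w c.1}.ncard :=
  small_component_has_many_sparse_friends_general d hd m n hm x K hK γ hsmall
end
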